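/- For rational functions, if [m/n]_q = N(q)/D(q) is a q-rational, then [n/m]_q = 1/[m/n]_{q^{-1}}; consequently the numerator and denominator of [n/m]_q are given by N_{n/m}(q) = q^d·D_{m/n}(1/q) and D_{n/m}(q) = q^d·N_{m/n}(1/q), where d = max(deg N_{m/n}, deg D_{m/n}). -/

import Mathlib

open Polynomial Matrix

/-- The q-deformed generator R_q = (q,1;0,1). -/
noncomputable def Rq : Matrix (Fin 2) (Fin 2) ℤ[X] := !![X, 1; 0, 1]

/-- The q-deformed generator L_q = (q,0;q,1). -/
noncomputable def Lq : Matrix (Fin 2) (Fin 2) ℤ[X] := !![X, 0; X, 1]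

/-- Alternating product M^{a₁}·N^{a₂}·M^{a₃}·⋯ associated with a list of exponents. -/
noncomputable def altProd (M N : Matrix (Fin 2) (Fin 2) ℤ[X]) :
    List ℕ → Matrix (Fin 2) (Fin 2) ℤ[X]
  | [] => 1
  | a :: rest => M ^ a * altProd N M rest

/-- The numerator of the q-rational with continued fraction expansion `as`
(k odd), read off from the matrix A_q = R_q^{a₁}L_q^{a₂}⋯R_q^{a_k}. -/
noncomputable def qNum (as : List ℕ) : ℤ[X] := altProd Rq Lq as 0 1

/-- The denominator of the q-rational with continued fraction expansion `as`. -/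
noncomputable def qDen (as : List ℕ) : ℤ[X] := altProd Rq Lq as 1 1

noncomputable def gs (a : ℕ) : ℤ[X] := ∑ i ∈ Finset.range a, X ^ i

lemma gs_zero : gs 0 = 0 := rfl

lemma gs_succ (a : ℕ) : gs (a + 1) = X ^ a + gs a := geom_sum_succ'

lemma gs_succ' (a : ℕ) : gs (a + 1) = X * gs a + 1 := geom_sum_succ

lemma gs_monic (a : ℕ) (h : 1 ≤ a) : (gs a).Monic := monic_geom_sum_X (by omega)

lemma gs_natDegree (a : ℕ) (h : 1 ≤ a) : (gs a).natDegree = a - 1 := by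
  induction a with
  | zero => omega
  | succ a ih =>
    rcases Nat.eq_zero_or_pos a with rfl | ha
    · simp [gs]
    · rw [gs_succ, natDegree_add_eq_left_of_natDegree_lt, natDegree_X_pow]
      · omega
      · rw [ih ha, natDegree_X_pow]; omega

lemma gs_natDegree_le (a : ℕ) : (gs a).natDegree ≤ a - 1 := by
  rcases Nat.eq_zero_or_pos a with rfl | ha
  · simp [gs]
  · exact le_of_eq (gs_natDegree a ha)

lemma gs_eval_one (a : ℕ) : (gs a).eval 1 = (a : ℤ) := by
  simp [gs, eval_finset_sum]

lemma Rq_pow (a : ℕ) : Rq ^ a = !![X ^ a, gs a; 0, 1] := by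
  induction a with
  | zero => simp [one_fin_two, gs_zero]
  | succ a ih =>
    rw [pow_succ, ih, Rq, mul_fin_two, gs_succ]
    congr 1 <;> ring_nf

lemma Lq_pow (a : ℕ) : Lq ^ a = !![X ^ a, 0; X * gs a, 1] := by
  induction a with
  | zero => simp [one_fin_two, gs_zero]
  | succ a ih =>
    rw [pow_succ, ih, Lq, mul_fin_two, gs_succ']
    congr 1 <;> ring_nf
lemma reflect_invol (N : ℕ) (p : ℤ[X]) : reflect N (reflect N p) = p := by
  ext i; simp [coeff_reflect, revAt_invol]

lemma reflect_sum (N : ℕ) (s : Finset ℕ) (f : ℕ → ℤ[X]) :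
    reflect N (∑ i ∈ s, f i) = ∑ i ∈ s, reflect N (f i) := by
  classical
  induction s using Finset.induction with
  | empty => simp
  | insert _ _ h ih => rw [Finset.sum_insert h, Finset.sum_insert h, reflect_add, ih]

lemma reflect_X_pow_self (a : ℕ) : reflect a ((X : ℤ[X]) ^ a) = 1 := by
  rw [reflect_monomial, revAt_le le_rfl, Nat.sub_self, pow_zero]

lemma reflect_one_pow (a : ℕ) : reflect a (1 : ℤ[X]) = X ^ a := by
  have := reflect_monomial a (0 : ℕ) (R := ℤ)
  simpa using this

lemma reflect_gs (a : ℕ) : reflect a (gs a) = X * gs a := by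
  rw [gs, reflect_sum, Finset.mul_sum]
  rw [← Finset.sum_range_reflect (fun j => X * X ^ j) a]
  apply Finset.sum_congr rfl
  intro i hi
  simp only [Finset.mem_range] at hi
  rw [reflect_monomial, revAt_le (by omega), ← pow_succ']
  congr 1
  omega

lemma reflect_X_gs (a : ℕ) : reflect a (X * gs a) = gs a := by
  rw [← reflect_gs, reflect_invol]

lemma gs_natDegree_le' (a : ℕ) : (gs a).natDegree ≤ a :=
  le_trans (gs_natDegree_le a) (Nat.sub_le a 1)

lemma X_gs_natDegree_le (a : ℕ) : (X * gs a).natDegree ≤ a := by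
  rcases Nat.eq_zero_or_pos a with rfl | ha
  · simp [gs]
  · refine le_trans (natDegree_mul_le) ?_
    have := gs_natDegree_le a
    simp only [natDegree_X]
    omega

lemma refl1 (a N : ℕ) (p q : ℤ[X]) (hp : p.natDegree ≤ N) (hq : q.natDegree ≤ N) :
    reflect (a + N) (X ^ a * p + gs a * q) = reflect N p + X * gs a * reflect N q := by
  rw [reflect_add, reflect_mul _ _ (natDegree_X_pow a).le hp,
    reflect_mul _ _ (gs_natDegree_le' a) hq, reflect_X_pow_self, reflect_gs, one_mul]

lemma refl2 (a N : ℕ) (p q : ℤ[X]) (hp : p.natDegree ≤ N) (hq : q.natDegree ≤ N) :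
    reflect (a + N) (0 * p + 1 * q) = X ^ a * reflect N q := by
  have h := reflect_mul (1:ℤ[X]) q (F := a) (G := N) (by simp) hq
  rw [one_mul, reflect_one_pow] at h
  rw [zero_mul, zero_add, one_mul, h]

lemma refl3 (a N : ℕ) (p q : ℤ[X]) (hp : p.natDegree ≤ N) (hq : q.natDegree ≤ N) :
    reflect (a + N) (X ^ a * p + 0 * q) = reflect N p := by
  rw [zero_mul, add_zero, reflect_mul _ _ (natDegree_X_pow a).le hp, reflect_X_pow_self, one_mul]

lemma refl4 (a N : ℕ) (p q : ℤ[X]) (hp : p.natDegree ≤ N) (hq : q.natDegree ≤ N) :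
    reflect (a + N) (X * gs a * p + 1 * q) = gs a * reflect N p + X ^ a * reflect N q := by
  have h := reflect_mul (1:ℤ[X]) q (F := a) (G := N) (by simp) hq
  rw [one_mul, reflect_one_pow] at h
  rw [one_mul, reflect_add, reflect_mul _ _ (X_gs_natDegree_le a) hp, reflect_X_gs, h]

section DegBounds

set_option linter.unusedVariables false

lemma Rq_pow_deg (a : ℕ) (i j : Fin 2) : ((Rq ^ a) i j).natDegree ≤ a := by
  rw [Rq_pow]
  fin_cases i <;> fin_cases j <;>
    simp [gs_natDegree_le' a, natDegree_X_pow]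

lemma Lq_pow_deg (a : ℕ) (i j : Fin 2) : ((Lq ^ a) i j).natDegree ≤ a := by
  rw [Lq_pow]
  fin_cases i <;> fin_cases j <;>
    simp [X_gs_natDegree_le a, natDegree_X_pow]

lemma altProd_deg : ∀ (w : List ℕ) (i j : Fin 2),
    (altProd Rq Lq w i j).natDegree ≤ w.sum ∧ (altProd Lq Rq w i j).natDegree ≤ w.sum := by
  intro w
  induction w with
  | nil =>
    intro i j
    constructor <;> (fin_cases i <;> fin_cases j <;> simp [altProd, Matrix.one_apply])
  | cons a t ih =>
    intro i j
    have key : ∀ (M : Matrix (Fin 2) (Fin 2) ℤ[X]) (hM : ∀ i j, (M i j).natDegree ≤ a)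
        (P : Matrix (Fin 2) (Fin 2) ℤ[X]) (hP : ∀ i j, (P i j).natDegree ≤ t.sum),
        ((M * P) i j).natDegree ≤ (a :: t).sum := by
      intro M hM P hP
      rw [Matrix.mul_apply, Fin.sum_univ_two, List.sum_cons]
      refine le_trans (natDegree_add_le _ _) ?_
      have h1 := natDegree_mul_le (p := M i 0) (q := P 0 j)
      have h2 := natDegree_mul_le (p := M i 1) (q := P 1 j)
      have := hM i 0; have := hM i 1; have := hP 0 j; have := hP 1 j
      omega
    constructor
    · exact key _ (Rq_pow_deg a) _ (fun i j => (ih i j).2)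
    · exact key _ (Lq_pow_deg a) _ (fun i j => (ih i j).1)

end DegBounds

theorem refl_alt : ∀ w : List ℕ,
    (reflect w.sum (altProd Rq Lq w 0 0) = altProd Lq Rq w 1 1 ∧
     reflect w.sum (altProd Rq Lq w 0 1) = altProd Lq Rq w 1 0 ∧
     reflect w.sum (altProd Rq Lq w 1 0) = altProd Lq Rq w 0 1 ∧
     reflect w.sum (altProd Rq Lq w 1 1) = altProd Lq Rq w 0 0) ∧
    (reflect w.sum (altProd Lq Rq w 0 0) = altProd Rq Lq w 1 1 ∧
     reflect w.sum (altProd Lq Rq w 0 1) = altProd Rq Lq w 1 0 ∧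
     reflect w.sum (altProd Lq Rq w 1 0) = altProd Rq Lq w 0 1 ∧
     reflect w.sum (altProd Lq Rq w 1 1) = altProd Rq Lq w 0 0) := by
  intro w
  induction w with
  | nil =>
    simp [altProd, Matrix.one_apply, reflect_one_pow]
  | cons a t ih =>
    obtain ⟨⟨e1, e2, e3, e4⟩, f1, f2, f3, f4⟩ := ih
    have hA : ∀ i j, (altProd Rq Lq t i j).natDegree ≤ t.sum := fun i j => (altProd_deg t i j).1
    have hB : ∀ i j, (altProd Lq Rq t i j).natDegree ≤ t.sum := fun i j => (altProd_deg t i j).2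
    refine ⟨⟨?_, ?_, ?_, ?_⟩, ?_, ?_, ?_, ?_⟩ <;>
      simp only [List.sum_cons, altProd, Matrix.mul_apply, Fin.sum_univ_two, Rq_pow, Lq_pow,
        Matrix.cons_val', Matrix.cons_val_zero, Matrix.cons_val_one, Matrix.head_cons,
        Matrix.head_fin_const, Matrix.empty_val', Matrix.cons_val_fin_one, Matrix.of_apply]
    · rw [refl1 a t.sum _ _ (hB 0 0) (hB 1 0), f1, f3]; ring
    · rw [refl1 a t.sum _ _ (hB 0 1) (hB 1 1), f2, f4]; ring
    · rw [refl2 a t.sum _ _ (hB 0 0) (hB 1 0), f3]; ring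
    · rw [refl2 a t.sum _ _ (hB 0 1) (hB 1 1), f4]; ring
    · rw [refl3 a t.sum _ _ (hA 0 0) (hA 1 0), e1]; ring
    · rw [refl3 a t.sum _ _ (hA 0 1) (hA 1 1), e2]; ring
    · rw [refl4 a t.sum _ _ (hA 0 0) (hA 1 0), e1, e3]; ring
    · rw [refl4 a t.sum _ _ (hA 0 1) (hA 1 1), e2, e4]; ring

/-! ### Recursion formulas for qNum/qDen -/

lemma qNum_single (a : ℕ) : qNum [a] = gs a := by
  simp [qNum, altProd, Rq_pow]

lemma qDen_single (a : ℕ) : qDen [a] = 1 := by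
  simp [qDen, altProd, Rq_pow]

lemma qNum_cons2 (a b : ℕ) (t : List ℕ) :
    qNum (a :: b :: t) = (X ^ (a + b) + gs a * (X * gs b)) * qNum t + gs a * qDen t := by
  simp only [qNum, qDen, altProd, Matrix.mul_apply, Fin.sum_univ_two, Rq_pow, Lq_pow,
    Matrix.cons_val', Matrix.cons_val_zero, Matrix.cons_val_one, Matrix.head_cons,
    Matrix.head_fin_const, Matrix.empty_val', Matrix.cons_val_fin_one, Matrix.of_apply]
  ring

lemma qDen_cons2 (a b : ℕ) (t : List ℕ) :
    qDen (a :: b :: t) = X * gs b * qNum t + qDen t := by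
  simp only [qNum, qDen, altProd, Matrix.mul_apply, Fin.sum_univ_two, Rq_pow, Lq_pow,
    Matrix.cons_val', Matrix.cons_val_zero, Matrix.cons_val_one, Matrix.head_cons,
    Matrix.head_fin_const, Matrix.empty_val', Matrix.cons_val_fin_one, Matrix.of_apply]
  ring

lemma n1_single (a : ℕ) : (qNum [a]).eval 1 = (a : ℤ) := by
  rw [qNum_single, gs_eval_one]

lemma d1_single (a : ℕ) : (qDen [a]).eval 1 = 1 := by
  rw [qDen_single, eval_one]

lemma n1_cons2 (a b : ℕ) (t : List ℕ) :
    (qNum (a :: b :: t)).eval 1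
      = (1 + (a:ℤ) * b) * (qNum t).eval 1 + (a:ℤ) * (qDen t).eval 1 := by
  rw [qNum_cons2]
  simp [gs_eval_one]

lemma d1_cons2 (a b : ℕ) (t : List ℕ) :
    (qDen (a :: b :: t)).eval 1 = (b:ℤ) * (qNum t).eval 1 + (qDen t).eval 1 := by
  rw [qDen_cons2]
  simp [gs_eval_one]

/-! ### Value invariants and uniqueness -/

theorem inv_ge : ∀ (w : List ℕ), w.length % 2 = 1 → (∀ x ∈ w, 1 ≤ x) →
    1 ≤ (qDen w).eval 1 ∧ (qDen w).eval 1 ≤ (qNum w).eval 1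
  | [] => by intro h; simp at h
  | [a] => by
    intro _ h
    have ha : 1 ≤ a := h a (by simp)
    rw [n1_single, d1_single]
    exact ⟨le_refl _, by exact_mod_cast ha⟩
  | (a :: b :: t) => by
    intro hl he
    have hodd : t.length % 2 = 1 := by simp at hl; omega
    have ih := inv_ge t hodd (fun x hx => he x (by simp [hx]))
    obtain ⟨h1, h2⟩ := ih
    have ha : 1 ≤ (a:ℤ) := by exact_mod_cast he a (by simp)
    have hb : 1 ≤ (b:ℤ) := by exact_mod_cast he b (by simp)
    rw [n1_cons2, d1_cons2]
    have hbn : 1 ≤ (b:ℤ) * (qNum t).eval 1 + (qDen t).eval 1 := by nlinarith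
    refine ⟨hbn, ?_⟩
    nlinarith [mul_nonneg (sub_nonneg.mpr ha) (le_trans zero_le_one hbn)]

lemma div_unique (x x' r r' n : ℤ) (hn : 0 < n) (hr : 0 ≤ r) (hr2 : r < n)
    (hr' : 0 ≤ r') (hr2' : r' < n) (h : x * n + r = x' * n + r') : x = x' ∧ r = r' := by
  have key : x = x' := by
    rcases lt_trichotomy x x' with h1 | h1 | h1
    · exfalso; nlinarith [mul_le_mul_of_nonneg_right (by omega : x + 1 ≤ x') hn.le]
    · exact h1
    · exfalso; nlinarith [mul_le_mul_of_nonneg_right (by omega : x' + 1 ≤ x) hn.le]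
  subst key
  exact ⟨rfl, by linarith⟩

theorem uniq : ∀ (w v : List ℕ), w.length % 2 = 1 → v.length % 2 = 1 →
    (∀ x ∈ w.tail, 1 ≤ x) → (∀ x ∈ v.tail, 1 ≤ x) →
    (qNum w).eval 1 = (qNum v).eval 1 → (qDen w).eval 1 = (qDen v).eval 1 → w = v
  | [], _ => by intro h; simp at h
  | (a :: w'), [] => by intro _ h; simp at h
  | [a], [a'] => by
    intro _ _ _ _ hN _
    rw [n1_single, n1_single] at hN
    norm_cast at hN
    rw [hN]
  | [a], (a' :: b' :: t') => by
    intro _ hlv _ htv hN hD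
    exfalso
    have hodd : t'.length % 2 = 1 := by simp at hlv; omega
    have hall : ∀ x ∈ t', 1 ≤ x := fun x hx => htv x (by simp [hx])
    obtain ⟨h1, h2⟩ := inv_ge t' hodd hall
    have hb : 1 ≤ (b':ℤ) := by exact_mod_cast htv b' (by simp)
    rw [d1_single, d1_cons2] at hD
    nlinarith
  | (a :: b :: t), [a'] => by
    intro hlw _ htw _ hN hD
    exfalso
    have hodd : t.length % 2 = 1 := by simp at hlw; omega
    have hall : ∀ x ∈ t, 1 ≤ x := fun x hx => htw x (by simp [hx])
    obtain ⟨h1, h2⟩ := inv_ge t hodd hall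
    have hb : 1 ≤ (b:ℤ) := by exact_mod_cast htw b (by simp)
    rw [d1_single, d1_cons2] at hD
    nlinarith
  | (a :: b :: t), (a' :: b' :: t') => by
    intro hlw hlv htw htv hN hD
    have hoddw : t.length % 2 = 1 := by simp at hlw; omega
    have hoddv : t'.length % 2 = 1 := by simp at hlv; omega
    have hallw : ∀ x ∈ t, 1 ≤ x := fun x hx => htw x (by simp [hx])
    have hallv : ∀ x ∈ t', 1 ≤ x := fun x hx => htv x (by simp [hx])
    obtain ⟨hw1, hw2⟩ := inv_ge t hoddw hallw
    obtain ⟨hv1, hv2⟩ := inv_ge t' hoddv hallv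
    have hb : 1 ≤ (b:ℤ) := by exact_mod_cast htw b (by simp)
    have hb' : 1 ≤ (b':ℤ) := by exact_mod_cast htv b' (by simp)
    rw [n1_cons2, n1_cons2] at hN
    rw [d1_cons2, d1_cons2] at hD
    set Nt := (qNum t).eval 1 with hNt
    set Dt := (qDen t).eval 1 with hDt
    set Nt' := (qNum t').eval 1 with hNt'
    set Dt' := (qDen t').eval 1 with hDt'
    have hnpos : 0 < (b:ℤ) * Nt + Dt := by nlinarith
    have hm : (a:ℤ) * ((b:ℤ) * Nt + Dt) + Nt = (a':ℤ) * ((b:ℤ) * Nt + Dt) + Nt' := by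
      have hm0 : (a:ℤ) * ((b:ℤ) * Nt + Dt) + Nt = (a':ℤ) * ((b':ℤ) * Nt' + Dt') + Nt' := by
        linear_combination hN
      rw [← hD] at hm0
      exact hm0
    have h1 : (a:ℤ) = a' ∧ Nt = Nt' := by
      refine div_unique _ _ _ _ _ hnpos (by linarith) (by nlinarith) (by linarith) ?_ hm
      rw [hD]; nlinarith
    obtain ⟨ha, hNtt⟩ := h1
    have hD' : (b:ℤ) * Nt + (Dt - 1) = (b':ℤ) * Nt + (Dt' - 1) := by
      rw [hNtt] at hD ⊢; linarith [hD]
    have h2 : (b:ℤ) = b' ∧ Dt - 1 = Dt' - 1 := by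
      refine div_unique _ _ _ _ _ (by linarith : (0:ℤ) < Nt) (by linarith) (by linarith)
        (by nlinarith) ?_ hD'
      rw [hNtt]; linarith [hv2]
    obtain ⟨hbb, hDtt⟩ := h2
    have ht : t = t' := uniq t t' hoddw hoddv
      (fun x hx => hallw x (List.mem_of_mem_tail hx))
      (fun x hx => hallv x (List.mem_of_mem_tail hx))
      hNtt (by linarith)
    have ha' : a = a' := by exact_mod_cast ha
    have hbn : b = b' := by exact_mod_cast hbb
    rw [ha', hbn, ht]

/-! ### The involution on continued fraction words -/

def iot : List ℕ → List ℕ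
  | [] => []
  | [a] => if a ≤ 1 then [a] else [0, a - 1, 1]
  | a :: b :: t =>
      if a = 0 then (b + (iot t).headI) :: (iot t).tail
      else 0 :: a :: (b + (iot t).headI) :: (iot t).tail

lemma iot_single (a : ℕ) : iot [a] = if a ≤ 1 then [a] else [0, a - 1, 1] := rfl

lemma iot_cons2 (a b : ℕ) (t : List ℕ) :
    iot (a :: b :: t) = if a = 0 then (b + (iot t).headI) :: (iot t).tail
      else 0 :: a :: (b + (iot t).headI) :: (iot t).tail := rfl

lemma iot_ne_nil : ∀ w : List ℕ, w ≠ [] → iot w ≠ []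
  | [], h => absurd rfl h
  | [a], _ => by rw [iot_single]; split <;> simp
  | (a :: b :: t), _ => by rw [iot_cons2]; split <;> simp

lemma headI_tail {α : Type*} [Inhabited α] (l : List α) (h : l ≠ []) :
    l.headI :: l.tail = l := by
  cases l with
  | nil => exact absurd rfl h
  | cons c u => rfl

lemma iot_matrix (a b : ℕ) (t : List ℕ) (ht : t ≠ []) :
    altProd Rq Lq (iot (a :: b :: t)) = Lq ^ a * (Rq ^ b * altProd Rq Lq (iot t)) := by
  have h := headI_tail (iot t) (iot_ne_nil t ht)
  by_cases ha : a = 0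
  · subst ha
    rw [show iot (0 :: b :: t) = (b + (iot t).headI) :: (iot t).tail by rw [iot_cons2]; simp]
    rw [← h]
    show Rq ^ (b + (iot t).headI) * altProd Lq Rq (iot t).tail
      = Lq ^ 0 * (Rq ^ b * (Rq ^ (iot t).headI * altProd Lq Rq (iot t).tail))
    rw [pow_zero, one_mul, pow_add, mul_assoc]
  · rw [show iot (a :: b :: t) = 0 :: a :: (b + (iot t).headI) :: (iot t).tail by
      rw [iot_cons2]; simp [ha]]
    rw [← h]
    show Rq ^ 0 * (Lq ^ a * (Rq ^ (b + (iot t).headI) * altProd Lq Rq (iot t).tail))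
      = Lq ^ a * (Rq ^ b * (Rq ^ (iot t).headI * altProd Lq Rq (iot t).tail))
    rw [pow_zero, one_mul, pow_add, mul_assoc]

theorem iot_col : ∀ (w : List ℕ), w.length % 2 = 1 → (∀ x ∈ w.tail, 1 ≤ x) → 1 ≤ w.sum →
    ∀ i : Fin 2, altProd Lq Rq w i 0 = X * altProd Rq Lq (iot w) i 1
  | [] => by intro h; simp at h
  | [a] => by
    intro _ _ hs i
    have ha : 1 ≤ a := by simpa using hs
    rcases eq_or_lt_of_le ha with h1 | h2
    · have : a = 1 := h1.symm
      subst this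
      have hiot : iot [1] = [1] := by rw [iot_single]; simp
      rw [hiot]
      show (Lq ^ 1 * altProd Rq Lq []) i 0 = X * ((Rq ^ 1 * altProd Lq Rq []) i 1)
      fin_cases i <;>
        simp [altProd, Lq_pow, Rq_pow, Rq, Lq, gs]
    · obtain ⟨k, rfl⟩ : ∃ k, a = k + 2 := ⟨a - 2, by omega⟩
      have hiot : iot [k + 2] = [0, k + 1, 1] := by
        rw [iot_single]
        rw [if_neg (by omega)]
        norm_num
      rw [hiot]
      have hred : altProd Rq Lq [0, k + 1, 1] = Lq ^ (k + 1) * Rq := by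
        show Rq ^ 0 * (Lq ^ (k + 1) * (Rq ^ 1 * altProd Lq Rq [])) = _
        rw [pow_zero, one_mul, pow_one]
        show Lq ^ (k + 1) * (Rq * 1) = _
        rw [mul_one]
      rw [hred]
      have hg : gs (k + 2) = X * gs (k + 1) + 1 := by simpa using gs_succ' (k + 1)
      show (Lq ^ (k + 2) * altProd Rq Lq []) i 0 = X * ((Lq ^ (k + 1) * Rq) i 1)
      rw [show altProd Rq Lq [] = 1 from rfl, Matrix.mul_one]
      fin_cases i <;>
        simp only [Lq_pow, Rq, Matrix.mul_apply, Fin.sum_univ_two,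
          Matrix.cons_val', Matrix.cons_val_zero, Matrix.cons_val_one, Matrix.head_cons,
          Matrix.head_fin_const, Matrix.empty_val', Matrix.cons_val_fin_one, Matrix.of_apply,
          Fin.isValue, Fin.zero_eta, Fin.mk_one]
      · ring
      · rw [hg]; ring
  | (a :: b :: t) => by
    intro hl ht _
    have hodd : t.length % 2 = 1 := by simp at hl; omega
    have hne : t ≠ [] := by
      intro h; rw [h] at hodd; simp at hodd
    have htt : ∀ x ∈ t.tail, 1 ≤ x := fun x hx => ht x (by simp [List.mem_of_mem_tail hx])
    have hts : 1 ≤ t.sum := by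
      cases t with
      | nil => exact absurd rfl hne
      | cons c u =>
        have := ht c (by simp)
        simp only [List.sum_cons]
        omega
    have ih := iot_col t hodd htt hts
    intro i
    show (Lq ^ a * (Rq ^ b * altProd Lq Rq t)) i 0
      = X * altProd Rq Lq (iot (a :: b :: t)) i 1
    rw [iot_matrix a b t hne]
    simp only [Matrix.mul_apply, Fin.sum_univ_two, ih 0, ih 1]
    ring

theorem iot_valid : ∀ (w : List ℕ), w.length % 2 = 1 → (∀ x ∈ w.tail, 1 ≤ x) →
    (iot w).length % 2 = 1 ∧ ∀ x ∈ (iot w).tail, 1 ≤ x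
  | [] => by intro h; simp at h
  | [a] => by
    intro _ _
    by_cases h : a ≤ 1
    · rw [show iot [a] = [a] by rw [iot_single]; simp [h]]
      simp
    · rw [show iot [a] = [0, a - 1, 1] by rw [iot_single]; simp [h]]
      refine ⟨by simp, ?_⟩
      intro x hx
      simp at hx
      rcases hx with h1 | h1 <;> omega
  | (a :: b :: t) => by
    intro hl ht
    have hodd : t.length % 2 = 1 := by simp at hl; omega
    have hne : t ≠ [] := by intro h; rw [h] at hodd; simp at hodd
    have hb : 1 ≤ b := ht b (by simp)
    have htt : ∀ x ∈ t.tail, 1 ≤ x := fun x hx => ht x (by simp [List.mem_of_mem_tail hx])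
    obtain ⟨ihl, iht⟩ := iot_valid t hodd htt
    have h := headI_tail (iot t) (iot_ne_nil t hne)
    have hlen : (iot t).tail.length + 1 = (iot t).length := by
      conv_rhs => rw [← h]
      simp
    by_cases ha : a = 0
    · subst ha
      rw [show iot (0 :: b :: t) = (b + (iot t).headI) :: (iot t).tail by rw [iot_cons2]; simp]
      constructor
      · simp only [List.length_cons]
        omega
      · exact iht
    · rw [show iot (a :: b :: t) = 0 :: a :: (b + (iot t).headI) :: (iot t).tail by
        rw [iot_cons2]; simp [ha]]
      constructor
      · simp only [List.length_cons]
        omega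
      · intro x hx
        simp only [List.tail_cons, List.mem_cons] at hx
        rcases hx with rfl | rfl | h1
        · omega
        · omega
        · exact iht x h1

/-! ### Degrees -/

theorem degkey : ∀ (w : List ℕ), w.length % 2 = 1 → (∀ x ∈ w.tail, 1 ≤ x) → 1 ≤ w.sum →
    (qNum w).Monic ∧ (qNum w).natDegree = w.sum - 1 ∧ (qDen w).natDegree ≤ w.sum - 1
  | [] => by intro h; simp at h
  | [a] => by
    intro _ _ hs
    have ha : 1 ≤ a := by simpa using hs
    rw [qNum_single, qDen_single]
    refine ⟨gs_monic a ha, ?_, by simp⟩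
    rw [gs_natDegree a ha]
    simp
  | (a :: b :: t) => by
    intro hl ht _
    have hodd : t.length % 2 = 1 := by simp at hl; omega
    have hne : t ≠ [] := by intro h; rw [h] at hodd; simp at hodd
    have hb : 1 ≤ b := ht b (by simp)
    have htt : ∀ x ∈ t.tail, 1 ≤ x := fun x hx => ht x (by simp [List.mem_of_mem_tail hx])
    have hts : 1 ≤ t.sum := by
      cases t with
      | nil => exact absurd rfl hne
      | cons c u =>
        have := ht c (by simp)
        simp only [List.sum_cons]
        omega
    obtain ⟨mN, dN, dD⟩ := degkey t hodd htt hts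
    rw [qNum_cons2, qDen_cons2]
    have hPq : (gs a * (X * gs b)).natDegree ≤ a + b - 1 := by
      rcases Nat.eq_zero_or_pos a with rfl | hapos
      · simp [gs_zero]
      · refine le_trans natDegree_mul_le ?_
        have h1 := gs_natDegree_le a
        have h2 := X_gs_natDegree_le b
        omega
    have hPm : (X ^ (a + b) + gs a * (X * gs b)).Monic := by
      apply monic_X_pow_add
      refine lt_of_le_of_lt degree_le_natDegree ?_
      exact_mod_cast (by omega : (gs a * (X * gs b)).natDegree < a + b)
    have hPd : (X ^ (a + b) + gs a * (X * gs b)).natDegree = a + b := by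
      rw [natDegree_add_eq_left_of_natDegree_lt, natDegree_X_pow]
      rw [natDegree_X_pow]
      omega
    have hmain : ((X ^ (a + b) + gs a * (X * gs b)) * qNum t).Monic := hPm.mul mN
    have hmaind : ((X ^ (a + b) + gs a * (X * gs b)) * qNum t).natDegree
        = a + b + t.sum - 1 := by
      rw [hPm.natDegree_mul mN, hPd, dN]
      omega
    have hsec : (gs a * qDen t).natDegree ≤ a + t.sum - 1 := by
      refine le_trans natDegree_mul_le ?_
      have h1 := gs_natDegree_le a
      omega
    have hlt : (gs a * qDen t).natDegree < ((X ^ (a + b) + gs a * (X * gs b)) * qNum t).natDegree := by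
      rw [hmaind]; omega
    refine ⟨?_, ?_, ?_⟩
    · refine hmain.add_of_left ?_
      refine lt_of_le_of_lt degree_le_natDegree ?_
      rw [degree_eq_natDegree hmain.ne_zero]
      exact_mod_cast hlt
    · rw [natDegree_add_eq_left_of_natDegree_lt hlt, hmaind]
      simp only [List.sum_cons]
      omega
    · refine le_trans (natDegree_add_le _ _) ?_
      have h1 : (X * gs b * qNum t).natDegree ≤ b + t.sum - 1 := by
        refine le_trans natDegree_mul_le ?_
        have h2 := X_gs_natDegree_le b
        omega
      simp only [List.sum_cons]
      omega

lemma eval_one_reflect (N : ℕ) (p : ℤ[X]) (h : p.natDegree ≤ N) :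
    (reflect N p).eval 1 = p.eval 1 := by
  haveI : Invertible (1 : ℤ) := invertibleOne
  have h2 := eval₂_reflect_mul_pow (RingHom.id ℤ) (1 : ℤ) N p h
  simp only [invOf_one, one_pow, mul_one] at h2
  exact h2


/-- If [m/n]_q = N(q)/D(q) is a q-rational, then [n/m]_q = 1/[m/n]_{q⁻¹}:
the numerator and denominator of [n/m]_q are N_{n/m}(q) = q^d·D_{m/n}(1/q) and
D_{n/m}(q) = q^d·N_{m/n}(1/q), where d = max(deg N_{m/n}, deg D_{m/n}).
Here m/n and n/m are encoded by their (odd length) continued fraction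
expansions `as` and `bs`. -/
theorem qRational_inverse (m n : ℕ) (hco : Nat.Coprime m n) (hm : 0 < m) (hn : 0 < n)
    (as bs : List ℕ)
    (hlen : as.length % 2 = 1) (hlen' : bs.length % 2 = 1)
    (htail : ∀ x ∈ as.tail, 1 ≤ x) (htail' : ∀ x ∈ bs.tail, 1 ≤ x)
    (hNa : (qNum as).eval 1 = (m : ℤ)) (hDa : (qDen as).eval 1 = (n : ℤ))
    (hNb : (qNum bs).eval 1 = (n : ℤ)) (hDb : (qDen bs).eval 1 = (m : ℤ)) :
    qNum bs = (qDen as).reflect (max (qNum as).natDegree (qDen as).natDegree)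
    ∧ qDen bs = (qNum as).reflect (max (qNum as).natDegree (qDen as).natDegree) := by
  have hs1 : 1 ≤ as.sum := by
    cases as with
    | nil => simp at hlen
    | cons a t =>
      cases t with
      | nil =>
        rw [n1_single] at hNa
        have ham : a = m := by exact_mod_cast hNa
        simp only [List.sum_cons, List.sum_nil, add_zero]
        omega
      | cons b u =>
        have hb := htail b (by simp)
        simp only [List.sum_cons]
        omega
  obtain ⟨mN, dN, dD⟩ := degkey as hlen htail hs1
  have hdmax : max (qNum as).natDegree (qDen as).natDegree = as.sum - 1 := by
    rw [dN]
    exact max_eq_left dD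
  obtain ⟨⟨e1, e2, e3, e4⟩, -⟩ := refl_alt as
  have ic := iot_col as hlen htail hs1
  have key1 : reflect as.sum (qDen as) = X * qNum (iot as) := e4.trans (ic 0)
  have key2 : reflect as.sum (qNum as) = X * qDen (iot as) := e2.trans (ic 1)
  have hDen_deg : (qDen as).natDegree ≤ as.sum := le_trans dD (by omega)
  have hNum_deg : (qNum as).natDegree ≤ as.sum := by rw [dN]; omega
  have ev1 : (qNum (iot as)).eval 1 = (n : ℤ) := by
    have h := congrArg (eval (1:ℤ)) key1
    rw [eval_one_reflect _ _ hDen_deg, hDa, eval_mul, eval_X, one_mul] at h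
    exact h.symm
  have ev2 : (qDen (iot as)).eval 1 = (m : ℤ) := by
    have h := congrArg (eval (1:ℤ)) key2
    rw [eval_one_reflect _ _ hNum_deg, hNa, eval_mul, eval_X, one_mul] at h
    exact h.symm
  obtain ⟨ivl, ivt⟩ := iot_valid as hlen htail
  have hbs : bs = iot as :=
    uniq bs (iot as) hlen' ivl htail' ivt (by rw [hNb, ev1]) (by rw [hDb, ev2])
  subst hbs
  have hsum_eq : as.sum = max (qNum as).natDegree (qDen as).natDegree + 1 := by
    rw [hdmax]; omega
  have h11 : reflect 1 (1 : ℤ[X]) = X := by rw [reflect_one_pow, pow_one]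
  constructor
  · have hmul := reflect_mul (qDen as) (1 : ℤ[X])
      (F := max (qNum as).natDegree (qDen as).natDegree) (G := 1)
      (by rw [hdmax]; exact dD) (by simp)
    rw [mul_one, h11] at hmul
    rw [← hsum_eq] at hmul
    have hx : X * qNum (iot as) = X * reflect (max (qNum as).natDegree (qDen as).natDegree) (qDen as) := by
      rw [← key1, hmul]; ring
    exact mul_left_cancel₀ Polynomial.X_ne_zero hx
  · have hmul := reflect_mul (qNum as) (1 : ℤ[X])
      (F := max (qNum as).natDegree (qDen as).natDegree) (G := 1)
      (by rw [hdmax, dN]) (by simp)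
    rw [mul_one, h11] at hmul
    rw [← hsum_eq] at hmul
    have hx : X * qDen (iot as) = X * reflect (max (qNum as).natDegree (qDen as).natDegree) (qNum as) := by
      rw [← key2, hmul]; ring
    exact mul_left_cancel₀ Polynomial.X_ne_zero hx
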